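/- For all interactions i1, i2 ∈ I, reach(par(i1,i2)) = { par(j1,j2) | j1 ∈ reach(i1), j2 ∈ reach(i2) }, where par = cr_L. -/
import Mathlib


/-- An atomic communication action: the emission (`isEmission = true`) or
reception (`isEmission = false`) of a message on a lifeline. -/
structure MyAction (L M : Type) where
  lifeline : L
  isEmission : Bool
  message : M

/-- Interaction terms: constants are actions and the empty interaction,
`loopS` is unary, and `strict`, `alt` and `cr ℓ` (for every `ℓ ⊆ L`) are binary.
`seq = cr ∅` and `par = cr Set.univ`. -/
inductive Interaction (L M : Type) : Type where
  | empty : Interaction L M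
  | act : MyAction L M → Interaction L M
  | loopS : Interaction L M → Interaction L M
  | strict : Interaction L M → Interaction L M → Interaction L M
  | alt : Interaction L M → Interaction L M → Interaction L M
  | cr : Set L → Interaction L M → Interaction L M → Interaction L M

namespace Interaction

variable {L M : Type}

/-- The evasion predicate `i ↓ ℓ`. -/
inductive Evades : Interaction L M → Set L → Prop where
  | empty (ℓ : Set L) : Evades .empty ℓ
  | act (a : MyAction L M) (ℓ : Set L) : a.lifeline ∉ ℓ → Evades (.act a) ℓ
  | altL {i1 i2 : Interaction L M} {ℓ} : Evades i1 ℓ → Evades (.alt i1 i2) ℓ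
  | altR {i1 i2 : Interaction L M} {ℓ} : Evades i2 ℓ → Evades (.alt i1 i2) ℓ
  | strict {i1 i2 : Interaction L M} {ℓ} : Evades i1 ℓ → Evades i2 ℓ →
      Evades (.strict i1 i2) ℓ
  | cr {i1 i2 : Interaction L M} {ℓ' ℓ} : Evades i1 ℓ → Evades i2 ℓ →
      Evades (.cr ℓ' i1 i2) ℓ
  | loopS (i1 : Interaction L M) (ℓ : Set L) : Evades (.loopS i1) ℓ

/-- The pruning relation `i ⤳ℓ i'`. -/
inductive Prune : Interaction L M → Set L → Interaction L M → Prop where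
  | empty (ℓ : Set L) : Prune .empty ℓ .empty
  | act (a : MyAction L M) (ℓ : Set L) : a.lifeline ∉ ℓ → Prune (.act a) ℓ (.act a)
  | altL {i1 i2 i1' : Interaction L M} {ℓ} : Prune i1 ℓ i1' → ¬ Evades i2 ℓ →
      Prune (.alt i1 i2) ℓ i1'
  | altR {i1 i2 i2' : Interaction L M} {ℓ} : Prune i2 ℓ i2' → ¬ Evades i1 ℓ →
      Prune (.alt i1 i2) ℓ i2'
  | altBoth {i1 i2 i1' i2' : Interaction L M} {ℓ} : Prune i1 ℓ i1' → Prune i2 ℓ i2' →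
      Prune (.alt i1 i2) ℓ (.alt i1' i2')
  | strict {i1 i2 i1' i2' : Interaction L M} {ℓ} : Prune i1 ℓ i1' → Prune i2 ℓ i2' →
      Prune (.strict i1 i2) ℓ (.strict i1' i2')
  | cr {i1 i2 i1' i2' : Interaction L M} {ℓ' ℓ} : Prune i1 ℓ i1' → Prune i2 ℓ i2' →
      Prune (.cr ℓ' i1 i2) ℓ (.cr ℓ' i1' i2')
  | loopS {i1 i1' : Interaction L M} {ℓ} : Prune i1 ℓ i1' →
      Prune (.loopS i1) ℓ (.loopS i1')
  | loopSElim {i1 : Interaction L M} {ℓ} : ¬ Evades i1 ℓ → Prune (.loopS i1) ℓ .empty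

/-- The non-expression predicate `i ̸→a`. -/
inductive NoExpr : Interaction L M → MyAction L M → Prop where
  | empty (a : MyAction L M) : NoExpr .empty a
  | act {a' a : MyAction L M} : a' ≠ a → NoExpr (.act a') a
  | loopS {i1 : Interaction L M} {a} : NoExpr i1 a → NoExpr (.loopS i1) a
  | strictNoEvade {i1 i2 : Interaction L M} {a} : NoExpr i1 a →
      ¬ Evades i1 Set.univ → NoExpr (.strict i1 i2) a
  | strictBoth {i1 i2 : Interaction L M} {a} : NoExpr i1 a →
      NoExpr i2 a → NoExpr (.strict i1 i2) a
  | crNoEvade {i1 i2 : Interaction L M} {ℓ a} : NoExpr i1 a →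
      ¬ Evades i1 ({a.lifeline} \ ℓ) → NoExpr (.cr ℓ i1 i2) a
  | crBoth {i1 i2 : Interaction L M} {ℓ a} : NoExpr i1 a →
      NoExpr i2 a → NoExpr (.cr ℓ i1 i2) a
  | alt {i1 i2 : Interaction L M} {a} : NoExpr i1 a → NoExpr i2 a →
      NoExpr (.alt i1 i2) a

/-- The execution relation `i →a i'`. -/
inductive Exec : Interaction L M → MyAction L M → Interaction L M → Prop where
  | act (a : MyAction L M) : Exec (.act a) a .empty
  | loop {i1 i1' : Interaction L M} {a} : Exec i1 a i1' →
      Exec (.loopS i1) a (.strict i1' (.loopS i1))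
  | strictL {i1 i2 i1' : Interaction L M} {a} : Exec i1 a i1' →
      Exec (.strict i1 i2) a (.strict i1' i2)
  | crL {i1 i2 i1' : Interaction L M} {ℓ a} : Exec i1 a i1' →
      Exec (.cr ℓ i1 i2) a (.cr ℓ i1' i2)
  | strictR {i1 i2 i2' : Interaction L M} {a} : Exec i2 a i2' → Evades i1 Set.univ →
      Exec (.strict i1 i2) a i2'
  | crR {i1 i2 i1' i2' : Interaction L M} {ℓ a} : Exec i2 a i2' →
      Prune i1 ({a.lifeline} \ ℓ) i1' → Exec (.cr ℓ i1 i2) a (.cr ℓ i1' i2')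
  | altChoiceL {i1 i2 i1' : Interaction L M} {a} : Exec i1 a i1' → NoExpr i2 a →
      Exec (.alt i1 i2) a i1'
  | altChoiceR {i1 i2 i2' : Interaction L M} {a} : Exec i2 a i2' → NoExpr i1 a →
      Exec (.alt i1 i2) a i2'
  | altDelay {i1 i2 i1' i2' : Interaction L M} {a} : Exec i1 a i1' → Exec i2 a i2' →
      Exec (.alt i1 i2) a (.alt i1' i2')

/-- The trace semantics `σ(i)`, as a predicate: `Sem i t` iff `t ∈ σ(i)`. -/
inductive Sem : Interaction L M → List (MyAction L M) → Prop where
  | nil {i : Interaction L M} : Evades i Set.univ → Sem i []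
  | cons {i i' : Interaction L M} {a t} : Exec i a i' → Sem i' t → Sem i (a :: t)

/-- One execution step: `i → i'` iff `i →a i'` for some action `a`. -/
def Step (i i' : Interaction L M) : Prop := ∃ a, Exec i a i'

/-- `reach i = { i' | i →* i' }`. -/
def Reach (i : Interaction L M) : Set (Interaction L M) :=
  {i' | Relation.ReflTransGen Step i i'}

/-- One-step rewriting by the simplification system `R`, closed under contexts. -/
inductive Rw : Interaction L M → Interaction L M → Prop where
  | strictEmptyL (x : Interaction L M) : Rw (.strict .empty x) x
  | strictEmptyR (x : Interaction L M) : Rw (.strict x .empty) x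
  | crEmptyL (ℓ : Set L) (x : Interaction L M) : Rw (.cr ℓ .empty x) x
  | crEmptyR (ℓ : Set L) (x : Interaction L M) : Rw (.cr ℓ x .empty) x
  | altEmptyLoop (x : Interaction L M) : Rw (.alt .empty (.loopS x)) (.loopS x)
  | altLoopEmpty (x : Interaction L M) : Rw (.alt (.loopS x) .empty) (.loopS x)
  | altEmptyEmpty : Rw (Interaction.alt (L := L) (M := M) .empty .empty) .empty
  | loopEmpty : Rw (Interaction.loopS (L := L) (M := M) .empty) .empty
  | loopCongr {i i' : Interaction L M} : Rw i i' → Rw (.loopS i) (.loopS i')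
  | strictCongrL {i1 i1' i2 : Interaction L M} : Rw i1 i1' →
      Rw (.strict i1 i2) (.strict i1' i2)
  | strictCongrR {i1 i2 i2' : Interaction L M} : Rw i2 i2' →
      Rw (.strict i1 i2) (.strict i1 i2')
  | altCongrL {i1 i1' i2 : Interaction L M} : Rw i1 i1' → Rw (.alt i1 i2) (.alt i1' i2)
  | altCongrR {i1 i2 i2' : Interaction L M} : Rw i2 i2' → Rw (.alt i1 i2) (.alt i1 i2')
  | crCongrL {i1 i1' i2 : Interaction L M} {ℓ} : Rw i1 i1' →
      Rw (.cr ℓ i1 i2) (.cr ℓ i1' i2)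
  | crCongrR {i1 i2 i2' : Interaction L M} {ℓ} : Rw i2 i2' →
      Rw (.cr ℓ i1 i2) (.cr ℓ i1 i2')

end Interaction

open Interaction

lemma evades_emptyset {L M : Type} (i : Interaction L M) : Evades i (∅ : Set L) := by
  induction i with
  | empty => exact .empty _
  | act a => exact .act a _ (by simp)
  | loopS i ih => exact .loopS _ _
  | strict i1 i2 ih1 ih2 => exact .strict ih1 ih2
  | alt i1 i2 ih1 ih2 => exact .altL ih1
  | cr ℓ i1 i2 ih1 ih2 => exact .cr ih1 ih2

lemma prune_emptyset_refl {L M : Type} (i : Interaction L M) : Prune i (∅ : Set L) i := by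
  induction i with
  | empty => exact .empty _
  | act a => exact .act a _ (by simp)
  | loopS i ih => exact .loopS ih
  | strict i1 i2 ih1 ih2 => exact .strict ih1 ih2
  | alt i1 i2 ih1 ih2 => exact .altBoth ih1 ih2
  | cr ℓ i1 i2 ih1 ih2 => exact .cr ih1 ih2

lemma prune_emptyset_eq {L M : Type} {i i' : Interaction L M}
    (h : Prune i (∅ : Set L) i') : i' = i := by
  generalize hℓ : (∅ : Set L) = ℓ at h
  induction h with
  | empty => rfl
  | act => rfl
  | altL _ h2 ih => exact absurd (hℓ ▸ evades_emptyset _) h2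
  | altR _ h2 ih => exact absurd (hℓ ▸ evades_emptyset _) h2
  | altBoth _ _ ih1 ih2 => rw [ih1 hℓ, ih2 hℓ]
  | strict _ _ ih1 ih2 => rw [ih1 hℓ, ih2 hℓ]
  | cr _ _ ih1 ih2 => rw [ih1 hℓ, ih2 hℓ]
  | loopS _ ih => rw [ih hℓ]
  | loopSElim h1 => exact absurd (hℓ ▸ evades_emptyset _) h1

lemma step_par_inv {L M : Type} {j1 j2 j' : Interaction L M}
    (h : Step (Interaction.cr Set.univ j1 j2) j') :
    (∃ j1', Step j1 j1' ∧ j' = Interaction.cr Set.univ j1' j2) ∨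
    (∃ j2', Step j2 j2' ∧ j' = Interaction.cr Set.univ j1 j2') := by
  obtain ⟨a, h⟩ := h
  cases h with
  | crL h1 => exact .inl ⟨_, ⟨a, h1⟩, rfl⟩
  | crR h2 hp =>
      rw [Set.diff_univ] at hp
      exact .inr ⟨_, ⟨a, h2⟩, by rw [prune_emptyset_eq hp]⟩

lemma reach_par_left {L M : Type} {i1 j1 : Interaction L M} (i2 : Interaction L M)
    (h : j1 ∈ Reach i1) :
    Relation.ReflTransGen Step (Interaction.cr Set.univ i1 i2)
      (Interaction.cr Set.univ j1 i2) := by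
  induction h with
  | refl => exact .refl
  | tail _ hs ih => exact ih.tail (let ⟨a, ha⟩ := hs; ⟨a, .crL ha⟩)

lemma reach_par_right {L M : Type} {i2 j2 : Interaction L M} (i1 : Interaction L M)
    (h : j2 ∈ Reach i2) :
    Relation.ReflTransGen Step (Interaction.cr Set.univ i1 i2)
      (Interaction.cr Set.univ i1 j2) := by
  induction h with
  | refl => exact .refl
  | tail _ hs ih =>
      refine ih.tail ?_
      obtain ⟨a, ha⟩ := hs
      exact ⟨a, .crR ha (by rw [Set.diff_univ]; exact prune_emptyset_refl _)⟩

/-- `reach(par(i1,i2)) = { par(j1,j2) | j1 ∈ reach(i1), j2 ∈ reach(i2) }`,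
where `par = cr_L`. -/
theorem reach_par {L M : Type} [Finite L] [Finite M] (i1 i2 : Interaction L M) :
    Reach (Interaction.cr Set.univ i1 i2) =
      {j | ∃ j1 ∈ Reach i1, ∃ j2 ∈ Reach i2, j = Interaction.cr Set.univ j1 j2} := by
  ext j
  constructor
  · intro hj
    induction hj with
    | refl => exact ⟨i1, .refl, i2, .refl, rfl⟩
    | tail _ hs ih =>
        obtain ⟨j1, hj1, j2, hj2, rfl⟩ := ih
        rcases step_par_inv hs with ⟨j1', hs1, rfl⟩ | ⟨j2', hs2, rfl⟩
        · exact ⟨j1', hj1.tail hs1, j2, hj2, rfl⟩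
        · exact ⟨j1, hj1, j2', hj2.tail hs2, rfl⟩
  · rintro ⟨j1, hj1, j2, hj2, rfl⟩
    exact (reach_par_left i2 hj1).trans (reach_par_right j1 hj2)
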